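/- arXiv:1207.4276 — 5 statements merged into one kernel-verified Lean document; each statement's English description precedes it below -/
import Mathlib

section
/- Let W be a Coxeter group with length function ℓ and root system Δ with positive roots Δ₊. Define the twisted length ℓ^y(w) = #(Δ₊ ∩ w(Δ₋) ∩ y(Δ₊)) − #(Δ₊ ∩ w(Δ₋) ∩ y(Δ₋)). If ℓ(y s_i) = ℓ(y) + 1 for a simple reflection s_i with simple root α_i, then ℓ^{y s_i}(w) = ℓ^y(w) if w⁻¹ y(α_i) ∈ Δ₊, and ℓ^{y s_i}(w) = ℓ^y(w) − 2 if w⁻¹ y(α_i) ∈ Δ₋. -/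
/-- The twisted length `ℓ^y(w) = #(Δ₊ ∩ w(Δ₋) ∩ y(Δ₊)) − #(Δ₊ ∩ w(Δ₋) ∩ y(Δ₋))`,
for a group `W` acting on a set of roots `R` with positive roots `pos` and
negative roots `neg`. -/
noncomputable def twistedLength {W R : Type*} [Group W] (φ : W →* Equiv.Perm R)
    (pos neg : Set R) (y w : W) : ℤ :=
  ((pos ∩ (φ w '' neg) ∩ (φ y '' pos)).ncard : ℤ)
    - ((pos ∩ (φ w '' neg) ∩ (φ y '' neg)).ncard : ℤ)

/-- if `ℓ(y sᵢ) = ℓ(y) + 1` then `ℓ^{y sᵢ}(w) = ℓ^y(w)` when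
`w⁻¹ y(αᵢ) ∈ Δ₊`, and `ℓ^{y sᵢ}(w) = ℓ^y(w) − 2` when `w⁻¹ y(αᵢ) ∈ Δ₋`. -/
theorem twistedLength_mul_simple {W R I : Type*} [Group W]
    (φ : W →* Equiv.Perm R) (pos : Set R) (ν : R ≃ R)
    -- `ν` is the negation map; roots split into positive and negative ones
    (hsplit : ∀ r : R, r ∈ pos ↔ ν r ∉ pos)
    (hinvol : ∀ r : R, ν (ν r) = r)
    (hequiv : ∀ (u : W) (r : R), φ u (ν r) = ν (φ u r))
    -- simple reflections `s i` with simple roots `α i`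
    (s : I → W) (α : I → R)
    (hαpos : ∀ i, α i ∈ pos)
    (hsα : ∀ i, φ (s i) (α i) = ν (α i))
    (hsperm : ∀ i, ∀ r ∈ pos, r ≠ α i → φ (s i) r ∈ pos)
    (hs2 : ∀ i, s i * s i = 1)
    -- the length function, given by the cardinality of the inversion set
    (ℓ : W → ℕ)
    (hfin : ∀ u : W, (pos ∩ (φ u '' (ν '' pos))).Finite)
    (hℓ : ∀ u : W, (ℓ u : ℤ) = ((pos ∩ (φ u '' (ν '' pos))).ncard : ℤ))
    (y w : W) (i : I) (hy : ℓ (y * s i) = ℓ y + 1) :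
    (φ w⁻¹ (φ y (α i)) ∈ pos →
      twistedLength φ pos (ν '' pos) (y * s i) w = twistedLength φ pos (ν '' pos) y w) ∧
    (φ w⁻¹ (φ y (α i)) ∈ ν '' pos →
      twistedLength φ pos (ν '' pos) (y * s i) w
        = twistedLength φ pos (ν '' pos) y w - 2) := by
  classical
  set β := φ y (α i) with hβdef
  have hν : ∀ r, ν r ∈ pos ↔ r ∉ pos := fun r => by rw [hsplit (ν r), hinvol r]
  have hneg : ν '' pos = posᶜ := by
    ext r
    simp only [Set.mem_image, Set.mem_compl_iff]
    constructor
    · rintro ⟨p, hp, rfl⟩; exact (hsplit p).mp hp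
    · intro hr; exact ⟨ν r, (hν r).mpr hr, hinvol r⟩
  have himg : ∀ u : W, φ u '' posᶜ = (φ u '' pos)ᶜ :=
    fun u => Set.image_compl_eq (φ u).bijective
  have hsinv : ∀ (u : W) (r : R), φ u (φ u⁻¹ r) = r := by
    intro u r
    rw [← Equiv.Perm.mul_apply, ← map_mul]
    simp
  have hs2inv : ∀ r, φ (s i) (φ (s i) r) = r := by
    intro r
    rw [← Equiv.Perm.mul_apply, ← map_mul, hs2 i]
    simp
  have hsimg : φ (s i) '' pos = insert (ν (α i)) (pos \ {α i}) := by
    ext r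
    simp only [Set.mem_image, Set.mem_insert_iff, Set.mem_diff, Set.mem_singleton_iff]
    constructor
    · rintro ⟨p, hp, rfl⟩
      by_cases h : p = α i
      · subst h; left; exact hsα i
      · right
        refine ⟨hsperm i p hp h, fun he => ?_⟩
        have hpν : p = ν (α i) := by rw [← hs2inv p, he, hsα i]
        exact (hsplit (α i)).mp (hαpos i) (hpν ▸ hp)
    · rintro (rfl | ⟨hr, hne⟩)
      · exact ⟨α i, hαpos i, hsα i⟩
      · exact ⟨φ (s i) r, hsperm i r hr hne, hs2inv r⟩
  have hA' : φ (y * s i) '' pos = insert (ν β) (φ y '' pos \ {β}) := by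
    rw [map_mul, Equiv.Perm.coe_mul, Set.image_comp, hsimg, Set.image_insert_eq,
      Set.image_diff (φ y).injective, Set.image_singleton, hequiv y (α i), ← hβdef]
  have hβA : β ∈ φ y '' pos := ⟨α i, hαpos i, rfl⟩
  have hνβA : ν β ∉ φ y '' pos := by
    rintro ⟨p, hp, he⟩
    have hpe : p = ν (α i) := (φ y).injective (he.trans (hequiv y (α i)).symm)
    exact (hsplit (α i)).mp (hαpos i) (hpe ▸ hp)
  have hβνβ : β ≠ ν β := by
    intro h
    have := hsplit β
    rw [← h] at this
    tauto
  have hMfin : ∀ u : W, (pos ∩ (φ u '' pos)ᶜ).Finite := by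
    intro u; have := hfin u; rwa [hneg, himg u] at this
  have hℓ' : ∀ u : W, (ℓ u : ℤ) = ((pos ∩ (φ u '' pos)ᶜ).ncard : ℤ) := by
    intro u; rw [hℓ u, hneg, himg u]
  have htl : ∀ u : W, twistedLength φ pos (ν '' pos) u w
      = ((pos ∩ (φ w '' pos)ᶜ ∩ (φ u '' pos)).ncard : ℤ)
        - ((pos ∩ (φ w '' pos)ᶜ ∩ (φ u '' pos)ᶜ).ncard : ℤ) := by
    intro u
    unfold twistedLength
    rw [hneg, himg w, himg u]
  -- β is positive
  have hβpos : β ∈ pos := by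
    by_contra hβ
    have hνβpos : ν β ∈ pos := (hν β).mpr hβ
    have hset : pos ∩ (φ (y * s i) '' pos)ᶜ = (pos ∩ (φ y '' pos)ᶜ) \ {ν β} := by
      rw [hA']
      ext r
      simp only [Set.mem_inter_iff, Set.mem_compl_iff, Set.mem_insert_iff, Set.mem_diff,
        Set.mem_singleton_iff]
      constructor
      · rintro ⟨h1, h2⟩
        push_neg at h2
        refine ⟨⟨h1, fun hrA => ?_⟩, h2.1⟩
        have := h2.2 hrA
        subst this
        exact hβ h1
      · rintro ⟨⟨h1, h2⟩, h3⟩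
        exact ⟨h1, by push_neg; exact ⟨h3, fun hrA => absurd hrA h2⟩⟩
    have h1 : (pos ∩ (φ (y * s i) '' pos)ᶜ).ncard + 1 = (pos ∩ (φ y '' pos)ᶜ).ncard := by
      rw [hset]
      exact Set.ncard_diff_singleton_add_one ⟨hνβpos, hνβA⟩ (hMfin y)
    have e1 : (ℓ (y * s i) : ℤ) = (ℓ y : ℤ) + 1 := by exact_mod_cast hy
    rw [hℓ' (y * s i), hℓ' y] at e1
    omega
  have hνβpos : ν β ∉ pos := (hsplit β).mp hβpos
  constructor
  · -- case w⁻¹ β positive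
    intro hwβ
    have hβw : β ∈ φ w '' pos := ⟨φ w⁻¹ β, hwβ, hsinv w β⟩
    have s1 : pos ∩ (φ w '' pos)ᶜ ∩ (φ (y * s i) '' pos)
        = pos ∩ (φ w '' pos)ᶜ ∩ (φ y '' pos) := by
      rw [hA']
      ext r
      simp only [Set.mem_inter_iff, Set.mem_compl_iff, Set.mem_insert_iff, Set.mem_diff,
        Set.mem_singleton_iff]
      constructor
      · rintro ⟨⟨h1, h2⟩, (rfl | ⟨h3, h4⟩)⟩
        · exact absurd h1 hνβpos
        · exact ⟨⟨h1, h2⟩, h3⟩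
      · rintro ⟨⟨h1, h2⟩, h3⟩
        exact ⟨⟨h1, h2⟩, Or.inr ⟨h3, fun he => h2 (he ▸ hβw)⟩⟩
    have s2 : pos ∩ (φ w '' pos)ᶜ ∩ (φ (y * s i) '' pos)ᶜ
        = pos ∩ (φ w '' pos)ᶜ ∩ (φ y '' pos)ᶜ := by
      rw [Set.ext_iff] at s1
      ext r
      have := s1 r
      simp only [Set.mem_inter_iff, Set.mem_compl_iff] at *
      tauto
    rw [htl (y * s i), htl y, s1, s2]
  · -- case w⁻¹ β negative
    intro hwβ
    rw [hneg, Set.mem_compl_iff] at hwβ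
    have hβw : β ∉ φ w '' pos := by
      rintro ⟨p, hp, he⟩
      have : φ w⁻¹ β = p := by rw [← he, ← Equiv.Perm.mul_apply, ← map_mul]; simp
      exact hwβ (this ▸ hp)
    have hβN : β ∈ pos ∩ (φ w '' pos)ᶜ := ⟨hβpos, hβw⟩
    have s1 : pos ∩ (φ w '' pos)ᶜ ∩ (φ (y * s i) '' pos)
        = (pos ∩ (φ w '' pos)ᶜ ∩ (φ y '' pos)) \ {β} := by
      rw [hA']
      ext r
      simp only [Set.mem_inter_iff, Set.mem_compl_iff, Set.mem_insert_iff, Set.mem_diff,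
        Set.mem_singleton_iff]
      constructor
      · rintro ⟨⟨h1, h2⟩, (rfl | ⟨h3, h4⟩)⟩
        · exact absurd h1 hνβpos
        · exact ⟨⟨⟨h1, h2⟩, h3⟩, h4⟩
      · rintro ⟨⟨⟨h1, h2⟩, h3⟩, h4⟩
        exact ⟨⟨h1, h2⟩, Or.inr ⟨h3, h4⟩⟩
    have s2 : pos ∩ (φ w '' pos)ᶜ ∩ (φ (y * s i) '' pos)ᶜ
        = insert β (pos ∩ (φ w '' pos)ᶜ ∩ (φ y '' pos)ᶜ) := by
      rw [hA']
      ext r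
      simp only [Set.mem_inter_iff, Set.mem_compl_iff, Set.mem_insert_iff, Set.mem_diff,
        Set.mem_singleton_iff]
      constructor
      · rintro ⟨⟨h1, h2⟩, h3⟩
        push_neg at h3
        by_cases hr : r = β
        · exact Or.inl hr
        · exact Or.inr ⟨⟨h1, h2⟩, fun hrA => hr (h3.2 hrA)⟩
      · rintro (rfl | ⟨⟨h1, h2⟩, h3⟩)
        · refine ⟨⟨hβpos, hβw⟩, ?_⟩
          push_neg
          exact ⟨hβνβ, fun _ => rfl⟩
        · refine ⟨⟨h1, h2⟩, ?_⟩
          push_neg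
          exact ⟨fun he => hνβpos (he ▸ h1), fun hrA => absurd hrA h3⟩
    have fin1 : (pos ∩ (φ w '' pos)ᶜ ∩ (φ y '' pos)).Finite :=
      (hMfin w).subset Set.inter_subset_left
    have fin2 : (pos ∩ (φ w '' pos)ᶜ ∩ (φ y '' pos)ᶜ).Finite :=
      (hMfin w).subset Set.inter_subset_left
    have c1 : ((pos ∩ (φ w '' pos)ᶜ ∩ (φ y '' pos)) \ {β}).ncard + 1
        = (pos ∩ (φ w '' pos)ᶜ ∩ (φ y '' pos)).ncard :=
      Set.ncard_diff_singleton_add_one ⟨hβN, hβA⟩ fin1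
    have c2 : (insert β (pos ∩ (φ w '' pos)ᶜ ∩ (φ y '' pos)ᶜ)).ncard
        = (pos ∩ (φ w '' pos)ᶜ ∩ (φ y '' pos)ᶜ).ncard + 1 :=
      Set.ncard_insert_of_notMem (fun h => h.2 hβA) fin2
    rw [htl (y * s i), htl y, s1, s2]
    omega
end

section
/- Let W be a Coxeter group acting on its real root system with positive roots Δ₊, and define the twisted length ℓ^y(w) = #(Δ₊ ∩ w(Δ₋) ∩ y(Δ₊)) − #(Δ₊ ∩ w(Δ₋) ∩ y(Δ₋)). Then for all w, y ∈ W, ℓ^y(w) = ℓ(y⁻¹ w) − ℓ(y⁻¹). -/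
/-- for all `w, y ∈ W`, `ℓ^y(w) = ℓ(y⁻¹ w) − ℓ(y⁻¹)`. -/
theorem twistedLength_eq_length_sub {W R I : Type*} [Group W]
    (φ : W →* Equiv.Perm R) (pos : Set R) (ν : R ≃ R)
    (hsplit : ∀ r : R, r ∈ pos ↔ ν r ∉ pos)
    (hinvol : ∀ r : R, ν (ν r) = r)
    (hequiv : ∀ (u : W) (r : R), φ u (ν r) = ν (φ u r))
    -- simple reflections `s i` with simple roots `α i`, generating `W`
    (s : I → W) (α : I → R)
    (hαpos : ∀ i, α i ∈ pos)
    (hsα : ∀ i, φ (s i) (α i) = ν (α i))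
    (hsperm : ∀ i, ∀ r ∈ pos, r ≠ α i → φ (s i) r ∈ pos)
    (hs2 : ∀ i, s i * s i = 1)
    (hgen : Subgroup.closure (Set.range s) = (⊤ : Subgroup W))
    -- the length function, given by the cardinality of the inversion set
    (ℓ : W → ℕ)
    (hfin : ∀ u : W, (pos ∩ (φ u '' (ν '' pos))).Finite)
    (hℓ : ∀ u : W, (ℓ u : ℤ) = ((pos ∩ (φ u '' (ν '' pos))).ncard : ℤ)) :
    ∀ w y : W, twistedLength φ pos (ν '' pos) y w = (ℓ (y⁻¹ * w) : ℤ) - (ℓ y⁻¹ : ℤ) := by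
  intro w y
  have hνinj : Function.Injective ν := ν.injective
  have hφinj : ∀ u : W, Function.Injective (φ u) := fun u => (φ u).injective
  have hφbij : ∀ u : W, Function.Bijective (φ u) := fun u => (φ u).bijective
  -- ν '' pos = posᶜ
  have hNc : ν '' pos = posᶜ := by
    ext r
    constructor
    · rintro ⟨p, hp, rfl⟩
      exact (hsplit p).1 hp
    · intro hr
      refine ⟨ν r, ?_, hinvol r⟩
      rw [hsplit, hinvol]
      exact hr
  have hcomm : ∀ (u : W) (S : Set R), φ u '' (ν '' S) = ν '' (φ u '' S) := by
    intro u S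
    rw [← Set.image_comp, ← Set.image_comp]
    exact congrArg (· '' S) (funext fun r => hequiv u r)
  have hνν : ∀ S : Set R, ν '' (ν '' S) = S := by
    intro S
    rw [← Set.image_comp]
    have h : ν ∘ ν = id := funext hinvol
    rw [h, Set.image_id]
  have himg : ∀ u : W,
      φ y '' (pos ∩ φ u '' (ν '' pos)) = (φ y '' pos) ∩ (φ (y * u) '' (ν '' pos)) := by
    intro u
    rw [Set.image_inter (hφinj y), ← Set.image_comp, map_mul]
    rfl
  have key : ∀ u : W, ((pos ∩ φ u '' (ν '' pos)).ncard : ℤ)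
      = (((φ y '' pos) ∩ (φ (y * u) '' (ν '' pos))).ncard : ℤ) := by
    intro u
    rw [← himg u, Set.ncard_image_of_injective _ (hφinj y)]
  have hℓ1 : (ℓ (y⁻¹ * w) : ℤ) = (((φ y '' pos) ∩ (φ w '' (ν '' pos))).ncard : ℤ) := by
    rw [hℓ, key (y⁻¹ * w), mul_inv_cancel_left]
  have hℓ2 : (ℓ y⁻¹ : ℤ) = (((φ y '' pos) ∩ (ν '' pos)).ncard : ℤ) := by
    rw [hℓ, key y⁻¹, mul_inv_cancel, map_one]
    simp
  -- finiteness
  have F1 : ((φ y '' pos) ∩ (φ w '' (ν '' pos))).Finite := by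
    have h := (hfin (y⁻¹ * w)).image (φ y)
    rw [himg, mul_inv_cancel_left] at h
    exact h
  have F2 : ((φ y '' pos) ∩ (ν '' pos)).Finite := by
    have h := (hfin y⁻¹).image (φ y)
    rw [himg, mul_inv_cancel, map_one] at h
    simpa using h
  have hwNc : φ w '' (ν '' pos) = (φ w '' pos)ᶜ := by
    rw [hNc, Set.image_compl_eq (hφbij w)]
  -- partition of yP ∩ wN by pos
  have e3 : ((φ y '' pos) ∩ (φ w '' (ν '' pos))).ncard
      = (pos ∩ (φ w '' (ν '' pos)) ∩ (φ y '' pos)).ncard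
        + (((φ y '' pos) ∩ (φ w '' (ν '' pos))) \ pos).ncard := by
    rw [← Set.ncard_inter_add_ncard_diff_eq_ncard ((φ y '' pos) ∩ (φ w '' (ν '' pos))) pos F1]
    congr 2
    ext r
    simp only [Set.mem_inter_iff]
    tauto
  -- partition of yP ∩ N by wN
  have e4 : ((φ y '' pos) ∩ (ν '' pos)).ncard
      = (((φ y '' pos) ∩ (φ w '' (ν '' pos))) \ pos).ncard
        + (pos ∩ (φ w '' (ν '' pos)) ∩ (φ y '' (ν '' pos))).ncard := by
    rw [← Set.ncard_inter_add_ncard_diff_eq_ncard ((φ y '' pos) ∩ (ν '' pos))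
      (φ w '' (ν '' pos)) F2]
    congr 1
    · congr 1
      ext r
      simp only [Set.mem_inter_iff, Set.mem_diff, hNc, Set.mem_compl_iff]
      tauto
    · have heq : ((φ y '' pos) ∩ (ν '' pos)) \ (φ w '' (ν '' pos))
          = ν '' (pos ∩ (φ w '' (ν '' pos)) ∩ (φ y '' (ν '' pos))) := by
        have h2 : ν '' (φ w '' (ν '' pos)) = φ w '' pos := by
          rw [← hcomm, hνν]
        have h3 : ν '' (φ y '' (ν '' pos)) = φ y '' pos := by
          rw [← hcomm, hνν]
        rw [Set.image_inter hνinj, Set.image_inter hνinj, h2, h3, hNc,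
          Set.image_compl_eq (hφbij w)]
        ext r
        simp only [Set.mem_inter_iff, Set.mem_compl_iff, Set.mem_diff]
        tauto
      rw [heq, Set.ncard_image_of_injective _ hνinj]
  rw [twistedLength, hℓ1, hℓ2, e3, e4]
  push_cast
  ring
end

section
/- For the affine Weyl group W = W̊ ⋉ t_{Q̊^∨}, the semi-infinite length function defined by ℓ^{∞/2}(w) = #{α ∈ Δ₊^{re} ∩ w(Δ₋^{re}) : ᾱ ∈ Δ̊₊} − #{α ∈ Δ₊^{re} ∩ w(Δ₋^{re}) : ᾱ ∈ Δ̊₋} satisfies ℓ^{∞/2}(t_λ y) = ℓ(y) − 2(ρ̊|λ) for all λ ∈ Q̊^∨ and y ∈ W̊, where ρ̊ is the half-sum of positive roots of g̊. -/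
open Set

/-- the semi-infinite length function
`ℓ^{∞/2}(w) = #{α ∈ Δ₊^{re} ∩ w(Δ₋^{re}) : ᾱ ∈ Δ̊₊} − #{α ∈ Δ₊^{re} ∩ w(Δ₋^{re}) : ᾱ ∈ Δ̊₋}`
satisfies `ℓ^{∞/2}(t_λ y) = ℓ(y) − 2(ρ̊|λ)` for `λ ∈ Q̊^∨` and `y ∈ W̊`.
Affine real roots are modelled as pairs `(α, n) ∈ V × ℤ` with classical part `α`,
positive affine roots `{(α,0) : α ∈ Δ̊₊} ∪ {(α,n) : α ∈ Δ̊, n ≥ 1}`, and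
`(t_λ y)⁻¹(α,n) = (y⁻¹α, n + (α|λ))`.  Here `2(ρ̊|λ) = Σ_{α ∈ Δ̊₊} (α|λ)`
since `ρ̊` is the half-sum of positive roots, and
`ℓ(y) = #{α ∈ Δ̊₊ : y⁻¹α ∈ Δ̊₋}`. -/
theorem semiInfiniteLength_translation_formula {V : Type*} [AddCommGroup V] [DecidableEq V]
    (Δpos : Finset V)                      -- the positive roots Δ̊₊ of g̊
    (B : V → V → ℤ)                        -- the invariant pairing (α|λ)
    (y : V ≃ V)                            -- an element of the finite Weyl group W̊
    (lam : V)                              -- an element of the coroot lattice Q̊^∨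
    (Δ : Set V) (hΔ : Δ = (Δpos : Set V) ∪ (fun a => -a) '' (Δpos : Set V))
    (hdisj : ∀ α ∈ Δpos, -α ∉ Δpos)
    (h0 : (0 : V) ∉ Δ)
    (hy : ∀ α ∈ Δ, y α ∈ Δ) (hy' : ∀ α ∈ Δ, y.symm α ∈ Δ)
    (hyneg : ∀ α : V, y (-α) = -(y α))
    (hBneg : ∀ α ν : V, B (-α) ν = -(B α ν)) :
    letI affPos : Set (V × ℤ) :=
      {p | (p.1 ∈ (Δpos : Set V) ∧ p.2 = 0) ∨ (p.1 ∈ Δ ∧ 1 ≤ p.2)}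
    -- the inversion set of `w = t_λ y`
    letI inv : Set (V × ℤ) :=
      {p | p ∈ affPos ∧ (y.symm p.1, p.2 + B p.1 lam) ∉ affPos}
    (({p ∈ inv | p.1 ∈ (Δpos : Set V)}.ncard : ℤ)
        - ({p ∈ inv | p.1 ∈ (fun a => -a) '' (Δpos : Set V)}.ncard : ℤ))
      = ((Δpos.filter (fun α => y.symm α ∉ Δpos)).card : ℤ)
        - ∑ α ∈ Δpos, B α lam := by
  classical
  classical
  set AP : Set (V × ℤ) := {p | p.1 ∈ (Δpos : Set V) ∧ p.2 = 0 ∨ p.1 ∈ Δ ∧ 1 ≤ p.2} with hAP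
  set I : Set (V × ℤ) := {p | p ∈ AP ∧ (y.symm p.1, p.2 + B p.1 lam) ∉ AP} with hI
  have hsubΔ : ∀ α ∈ Δpos, α ∈ Δ := fun α hα => hΔ ▸ Or.inl hα
  have hnegΔ : ∀ α ∈ Δpos, -α ∈ Δ := fun α hα => hΔ ▸ Or.inr ⟨α, hα, rfl⟩
  have hsymmneg : ∀ α : V, y.symm (-α) = -(y.symm α) := by
    intro α
    apply y.injective
    rw [Equiv.apply_symm_apply, hyneg, Equiv.apply_symm_apply]
  have hΔcases : ∀ α, α ∈ Δ → α ∉ Δpos → -α ∈ Δpos := by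
    intro α hα hnot
    rw [hΔ] at hα
    rcases hα with h | ⟨β, hβ, rfl⟩
    · exact absurd h hnot
    · simpa using hβ
  set Np : V → ℤ := fun α => if y.symm α ∈ Δpos then -B α lam else -B α lam + 1 with hNp
  set Nm : V → ℤ := fun α => if y.symm α ∈ Δpos then B α lam + 1 else B α lam with hNm
  -- characterization of inversions with positive classical part
  have hmemP : ∀ (α : V) (n : ℤ),
      ((α, n) ∈ I ∧ α ∈ Δpos) ↔ (α ∈ Δpos ∧ 0 ≤ n ∧ n < Np α) := by
    intro α n
    simp only [hI, hAP, Set.mem_setOf_eq]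
    constructor
    · rintro ⟨⟨haff, hnot⟩, hα⟩
      have hyΔ : y.symm α ∈ Δ := hy' α (hsubΔ α hα)
      have h1 : ¬ (1 ≤ n + B α lam) := fun h => hnot (Or.inr ⟨hyΔ, h⟩)
      refine ⟨hα, ?_, ?_⟩
      · rcases haff with ⟨_, h⟩ | ⟨_, h⟩ <;> omega
      · by_cases hys : y.symm α ∈ Δpos
        · have h2 : ¬ (n + B α lam = 0) := fun h => hnot (Or.inl ⟨hys, h⟩)
          simp only [hNp] at *
          rw [if_pos hys]; omega
        · have hys' : y.symm α ∉ Δpos := hys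
          simp only [hNp] at *
          rw [if_neg hys']; omega
    · rintro ⟨hα, h0n, hlt⟩
      refine ⟨⟨?_, ?_⟩, hα⟩
      · rcases eq_or_ne n 0 with rfl | h
        · exact Or.inl ⟨hα, rfl⟩
        · exact Or.inr ⟨hsubΔ α hα, by omega⟩
      · rintro (⟨hys, heq⟩ | ⟨-, hge⟩)
        · have hys' : y.symm α ∈ Δpos := hys
          simp only [hNp] at hlt
          rw [if_pos hys'] at hlt; omega
        · simp only [hNp] at hlt; split_ifs at hlt <;> omega
  -- characterization of inversions with negative classical part
  have hmemM : ∀ (α : V) (n : ℤ),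
      ((α, n) ∈ I ∧ α ∈ (fun a => -a) '' (Δpos : Set V)) ↔
        (∃ β ∈ Δpos, α = -β ∧ 1 ≤ n ∧ n < Nm β) := by
    intro α n
    simp only [hI, hAP, Set.mem_setOf_eq, Set.mem_image, Finset.mem_coe]
    constructor
    · rintro ⟨⟨haff, hnot⟩, β, hβ, rfl⟩
      have hαΔ : -β ∈ Δ := hnegΔ β hβ
      have hyβΔ : y.symm β ∈ Δ := hy' β (hsubΔ β hβ)
      have hBm : B (-β) lam = -(B β lam) := hBneg β lam
      have hn1 : 1 ≤ n := by
        rcases haff with ⟨h, _⟩ | ⟨_, h⟩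
        · exact absurd h (hdisj β hβ)
        · exact h
      have hyα : y.symm (-β) = -(y.symm β) := hsymmneg β
      have h1 : ¬ (1 ≤ n + B (-β) lam) := fun h => hnot (Or.inr ⟨hy' _ hαΔ, h⟩)
      refine ⟨β, hβ, rfl, hn1, ?_⟩
      by_cases hys : y.symm β ∈ Δpos
      · simp only [hNm]
        rw [if_pos hys]; omega
      · have hyαpos : y.symm (-β) ∈ Δpos := by
          rw [hyα]; exact hΔcases _ hyβΔ hys
        have h2 : ¬ (n + B (-β) lam = 0) := fun h => hnot (Or.inl ⟨hyαpos, h⟩)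
        simp only [hNm]
        rw [if_neg hys]; omega
    · rintro ⟨β, hβ, rfl, hn1, hlt⟩
      have hαΔ : -β ∈ Δ := hnegΔ β hβ
      have hBm : B (-β) lam = -(B β lam) := hBneg β lam
      have hyα : y.symm (-β) = -(y.symm β) := hsymmneg β
      refine ⟨⟨Or.inr ⟨hαΔ, hn1⟩, ?_⟩, β, hβ, rfl⟩
      rintro (⟨hys, heq⟩ | ⟨-, hge⟩)
      · rw [hyα] at hys
        have hys' : y.symm β ∉ Δpos := by
          intro h; exact hdisj _ h (by simpa using hys)
        simp only [hNm] at hlt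
        rw [if_neg hys'] at hlt; omega
      · simp only [hNm] at hlt; split_ifs at hlt <;> omega
  -- the two sets as finsets
  have hinjn : ∀ α : V, Function.Injective (fun n : ℤ => (α, n)) := by
    intro α a b h; simpa using h
  set Fp : Finset (V × ℤ) :=
    Δpos.biUnion (fun α => (Finset.Ico (0:ℤ) (Np α)).image fun n => (α, n)) with hFp
  set Fm : Finset (V × ℤ) :=
    Δpos.biUnion (fun β => (Finset.Ico (1:ℤ) (Nm β)).image fun n => (-β, n)) with hFm
  have hSp : {p ∈ I | p.1 ∈ (Δpos : Set V)} = ↑Fp := by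
    ext ⟨α, n⟩
    rw [Set.mem_sep_iff]
    simp only [Finset.mem_coe, hFp, Finset.mem_biUnion, Finset.mem_image, Finset.mem_Ico,
      Prod.mk.injEq]
    rw [hmemP α n]
    constructor
    · rintro ⟨hα, h0n, hlt⟩; exact ⟨α, hα, n, ⟨h0n, hlt⟩, rfl, rfl⟩
    · rintro ⟨β, hβ, m, ⟨hm0, hmlt⟩, rfl, rfl⟩; exact ⟨hβ, hm0, hmlt⟩
  have hSm : {p ∈ I | p.1 ∈ (fun a => -a) '' (Δpos : Set V)} = ↑Fm := by
    ext ⟨α, n⟩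
    rw [Set.mem_sep_iff]
    simp only [Finset.mem_coe, hFm, Finset.mem_biUnion, Finset.mem_image, Finset.mem_Ico,
      Prod.mk.injEq]
    rw [hmemM α n]
    constructor
    · rintro ⟨β, hβ, rfl, hn1, hlt⟩; exact ⟨β, hβ, n, ⟨hn1, hlt⟩, rfl, rfl⟩
    · rintro ⟨β, hβ, m, ⟨hm1, hmlt⟩, rfl, rfl⟩; exact ⟨β, hβ, rfl, hm1, hmlt⟩
  have hcardP : Fp.card = ∑ α ∈ Δpos, (Np α).toNat := by
    rw [hFp, Finset.card_biUnion]
    · refine Finset.sum_congr rfl fun α hα => ?_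
      rw [Finset.card_image_of_injective _ (hinjn α), Int.card_Ico]
      simp
    · intro a ha b hb hab
      simp only [Finset.disjoint_left, Finset.mem_image, Finset.mem_Ico]
      rintro p ⟨m, _, rfl⟩ ⟨m', _, h⟩
      exact hab (by simpa using (Prod.mk.injEq _ _ _ _ ▸ h).1.symm)
  have hcardM : Fm.card = ∑ α ∈ Δpos, (Nm α - 1).toNat := by
    rw [hFm, Finset.card_biUnion]
    · refine Finset.sum_congr rfl fun α hα => ?_
      rw [Finset.card_image_of_injective _ (hinjn (-α)), Int.card_Ico]
    · intro a ha b hb hab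
      simp only [Finset.disjoint_left, Finset.mem_image, Finset.mem_Ico]
      rintro p ⟨m, _, rfl⟩ ⟨m', _, h⟩
      have : -b = -a := (Prod.mk.injEq _ _ _ _ ▸ h).1
      exact hab (neg_injective this.symm)
  rw [hSp, hSm, Set.ncard_coe_finset, Set.ncard_coe_finset, hcardP, hcardM,
    Finset.card_filter]
  rw [Nat.cast_sum, Nat.cast_sum, Nat.cast_sum, ← Finset.sum_sub_distrib,
    ← Finset.sum_sub_distrib]
  refine Finset.sum_congr rfl fun α hα => ?_
  by_cases hys : y.symm α ∈ Δpos <;>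
    simp only [hNp, hNm, hys, if_true, if_false, not_true_eq_false, not_false_eq_true,
      Nat.cast_ite, Nat.cast_one, Nat.cast_zero] <;> omega
end

section
/- Let v = t_μ y be an element of the affine Weyl group with μ ∈ Q̊^∨ and y ∈ W̊, and let S ⊂ Π̊. Then v ∈ W^S (i.e. v⁻¹(Δ_{S,+}) ⊂ Δ₊^{re}) if and only if for every α ∈ Δ̊_{S,+}: α(μ) = 0 when y⁻¹(α) ∈ Δ̊₊, and α(μ) = 1 when y⁻¹(α) ∈ Δ̊₋. -/
open Set

/-- for `v = t_μ y` in the affine Weyl group (with `μ ∈ Q̊^∨`, `y ∈ W̊`)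
and `S ⊆ Π̊`, one has `v ∈ W^S` (i.e. `v⁻¹(Δ_{S,+}) ⊆ Δ₊^{re}`) if and only if for every
`α ∈ Δ̊_{S,+}`: `α(μ) = 0` when `y⁻¹(α) ∈ Δ̊₊` and `α(μ) = 1` when `y⁻¹(α) ∈ Δ̊₋`.
Affine real roots are pairs `(α, n) ∈ V × ℤ`, positive affine roots are
`{(α,0) : α ∈ Δ̊₊} ∪ {(α,n) : α ∈ Δ̊, n ≥ 1}`, `Δ_{S,+} = {(α,n) ∈ Δ₊^{re} : α ∈ Δ̊_S}`,
and `v⁻¹(α,n) = (y⁻¹α, n + α(μ))`. -/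
theorem mem_WS_iff {V : Type*} [AddCommGroup V] [DecidableEq V]
    (Δpos : Finset V)                      -- the positive roots Δ̊₊
    (B : V → V → ℤ)                        -- the pairing α(μ) = (α|μ)
    (y : V ≃ V) (μ : V)
    (Δ : Set V) (hΔ : Δ = (Δpos : Set V) ∪ (fun a => -a) '' (Δpos : Set V))
    (hdisj : ∀ α ∈ Δpos, -α ∉ Δpos)
    (h0 : (0 : V) ∉ Δ)
    (hy : ∀ α ∈ Δ, y α ∈ Δ) (hy' : ∀ α ∈ Δ, y.symm α ∈ Δ)
    (hyneg : ∀ α : V, y (-α) = -(y α))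
    (hBneg : ∀ α ν : V, B (-α) ν = -(B α ν))
    (ΔSf : Set V)                          -- the finite subroot system Δ̊_S
    (hS : ΔSf ⊆ Δ)
    (hSneg : ∀ α, α ∈ ΔSf ↔ -α ∈ ΔSf) :
    letI affPos : Set (V × ℤ) :=
      {p | (p.1 ∈ (Δpos : Set V) ∧ p.2 = 0) ∨ (p.1 ∈ Δ ∧ 1 ≤ p.2)}
    ((∀ α : V, ∀ n : ℤ, α ∈ ΔSf → (α, n) ∈ affPos →
        (y.symm α, n + B α μ) ∈ affPos)
      ↔ (∀ α ∈ ΔSf ∩ (Δpos : Set V),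
          (y.symm α ∈ (Δpos : Set V) → B α μ = 0) ∧
          (y.symm α ∈ (fun a => -a) '' (Δpos : Set V) → B α μ = 1))) := by
  have hsymmneg : ∀ α : V, y.symm (-α) = -(y.symm α) := by
    intro α
    apply y.injective
    rw [Equiv.apply_symm_apply, hyneg, Equiv.apply_symm_apply]
  have hmemΔ : ∀ α : V, α ∈ Δ ↔ α ∈ Δpos ∨ -α ∈ Δpos := by
    intro α
    rw [hΔ]
    constructor
    · rintro (h | ⟨b, hb, rfl⟩)
      · exact Or.inl h
      · right; simpa using hb
    · rintro (h | h)
      · exact Or.inl h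
      · exact Or.inr ⟨-α, h, by simp⟩
  constructor
  · rintro H α ⟨hαS, hαpos⟩
    have hαΔ : α ∈ Δ := hS hαS
    have hnegS : -α ∈ ΔSf := (hSneg α).1 hαS
    have hnegΔ : -α ∈ Δ := hS hnegS
    have h1 := H α 0 hαS (Or.inl ⟨hαpos, rfl⟩)
    have h2 := H (-α) 1 hnegS (Or.inr ⟨hnegΔ, le_refl 1⟩)
    rw [hsymmneg, hBneg] at h2
    constructor
    · intro hyp
      have hne : -(y.symm α) ∉ Δpos := hdisj _ hyp
      rcases h2 with ⟨h2a, _⟩ | ⟨_, h2b⟩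
      · exact absurd h2a hne
      · rcases h1 with ⟨_, h1b⟩ | ⟨_, h1b⟩ <;> omega
    · rintro ⟨b, hb, hbe⟩
      have hne : y.symm α ∉ Δpos := by
        intro h
        simp only [← hbe] at h; exact hdisj b hb h
      rcases h1 with ⟨h1a, _⟩ | ⟨_, h1b⟩
      · exact absurd h1a hne
      · rcases h2 with ⟨_, h2b⟩ | ⟨_, h2b⟩ <;> omega
  · intro H α n hαS hpos
    have hαΔ : α ∈ Δ := hS hαS
    have hyαΔ : y.symm α ∈ Δ := hy' α hαΔ
    rcases (hmemΔ α).1 hαΔ with hp | hn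
    · have hc := H α ⟨hαS, hp⟩
      rcases (hmemΔ _).1 hyαΔ with hyp | hyn
      · have hB := hc.1 hyp
        rcases hpos with ⟨_, h0'⟩ | ⟨_, h1'⟩
        · exact Or.inl ⟨hyp, by omega⟩
        · exact Or.inr ⟨hyαΔ, by omega⟩
      · have hB := hc.2 ⟨-(y.symm α), hyn, by simp⟩
        rcases hpos with ⟨_, h0'⟩ | ⟨_, h1'⟩
        · exact Or.inr ⟨hyαΔ, by omega⟩
        · exact Or.inr ⟨hyαΔ, by omega⟩
    · have hαnot : α ∉ Δpos := fun h => hdisj α h hn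
      have hn1 : 1 ≤ n := by
        rcases hpos with ⟨h, _⟩ | ⟨_, h⟩
        · exact absurd h hαnot
        · exact h
      have hnegS : -α ∈ ΔSf := (hSneg α).1 hαS
      have hc := H (-α) ⟨hnegS, hn⟩
      have hBrel : B (-α) μ = -(B α μ) := hBneg α μ
      have hsm : y.symm (-α) = -(y.symm α) := hsymmneg α
      rcases (hmemΔ _).1 hyαΔ with hyp | hyn
      · have hB := hc.2 ⟨y.symm α, hyp, by rw [hsm]⟩
        rw [hBrel] at hB
        by_cases hone : n = 1
        · exact Or.inl ⟨hyp, by omega⟩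
        · exact Or.inr ⟨hyαΔ, by omega⟩
      · have hB := hc.1 (by rw [hsm]; exact hyn)
        rw [hBrel] at hB
        exact Or.inr ⟨hyαΔ, by omega⟩
end

section
/- Let W be the affine Weyl group of a simple Lie algebra g̊ ≠ sl₂, and for p ∈ ℤ let W^p = {w ∈ W : ℓ^{∞/2}(w) = p} where ℓ^{∞/2} is the semi-infinite length function. Then W^p is infinite for every p ∈ ℤ. If g̊ = sl₂, then W^p has exactly one element for every p ∈ ℤ. -/
open Set

/-!
Write `ℓ^{∞/2}(y, μ) = ℓ(y) − 2(ρ̊|μ)`. Every `p ∈ ℤ` is a value: take `y = 1` or an element of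
length one according to the parity of `p`, and `μ` a multiple of a simple coroot, on which
`2(ρ̊|·)` takes the value `2`. Translating `μ` by the kernel of `2(ρ̊|·)` preserves the level.
In rank at least two this kernel contains `αᵢ^∨ − αⱼ^∨ ≠ 0`, so every level set is infinite.
In rank one `2(ρ̊|·)` is injective with even values, and `ℓ` is injective with values in `{0, 1}`,
so `ℓ(y)` is the parity of `p`, which determines `y` and then `μ`.
-/

section SemiInfiniteLength

variable {Wf Q : Type*} [AddCommGroup Q]

def semiInfiniteLength (ℓ : Wf → ℕ) (ρ2 : Q →+ ℤ) (w : Wf × Q) : ℤ :=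
  ℓ w.1 - ρ2 w.2

theorem semiInfiniteLength_surjective [One Wf] {ℓ : Wf → ℕ} {ρ2 : Q →+ ℤ} (hone : ℓ 1 = 0)
    (hodd : ∃ y : Wf, ℓ y = 1) {α : Q} (hα : ρ2 α = 2) :
    Function.Surjective (semiInfiniteLength ℓ ρ2) := by
  intro p
  obtain ⟨s, hs⟩ := hodd
  rcases Int.even_or_odd' p with ⟨m, rfl | rfl⟩
  · exact ⟨(1, (-m) • α), by simp [semiInfiniteLength, hone, hα, mul_comm]⟩
  · exact ⟨(s, (-m) • α), by simp [semiInfiniteLength, hs, hα]; ring⟩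

theorem infinite_semiInfiniteLength_preimage_of_infinite_ker (ℓ : Wf → ℕ) {ρ2 : Q →+ ℤ}
    (hker : (ρ2.ker : Set Q).Infinite) (w : Wf × Q) :
    (semiInfiniteLength ℓ ρ2 ⁻¹' {semiInfiniteLength ℓ ρ2 w}).Infinite := by
  have : Infinite ρ2.ker := hker.to_subtype
  refine infinite_of_injective_forall_mem (f := fun k : ρ2.ker ↦ (w.1, w.2 + k)) ?_ ?_
  · intro k k' h
    simpa using congrArg Prod.snd h
  · intro k
    simp [semiInfiniteLength, AddMonoidHom.mem_ker.mp k.2]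

theorem semiInfiniteLength_injective {ℓ : Wf → ℕ} {ρ2 : Q →+ ℤ} (hℓ : Function.Injective ℓ)
    (hℓ_le : ∀ y, ℓ y ≤ 1) (hρ : Function.Injective ρ2) (hρ_even : ∀ μ, Even (ρ2 μ)) :
    Function.Injective (semiInfiniteLength ℓ ρ2) := by
  rintro ⟨y, μ⟩ ⟨y', μ'⟩ h
  obtain ⟨a, ha⟩ := hρ_even μ
  obtain ⟨a', ha'⟩ := hρ_even μ'
  have hy : ℓ y = ℓ y' := by
    have := hℓ_le y; have := hℓ_le y'
    simp only [semiInfiniteLength] at h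
    omega
  have hμ : ρ2 μ = ρ2 μ' := by simpa [semiInfiniteLength, hy] using h
  rw [hℓ hy, hρ hμ]

end SemiInfiniteLength

theorem AddMonoidHom.infinite_ker_of_basis {Q I : Type*} [AddCommGroup Q] (ρ2 : Q →+ ℤ)
    (b : Module.Basis I ℤ Q) {i j : I} (hij : i ≠ j) (hρ : ρ2 (b i) = ρ2 (b j)) :
    (ρ2.ker : Set Q).Infinite := by
  refine infinite_of_injective_forall_mem (f := fun n : ℤ ↦ n • (b i - b j)) ?_ ?_
  · refine Function.LeftInverse.injective (g := fun μ ↦ b.repr μ i) fun n ↦ ?_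
    simp [Finsupp.single_eq_of_ne' hij.symm]
  · intro n
    simp [hρ]

theorem AddMonoidHom.eq_two_mul_repr {Q I : Type*} [AddCommGroup Q] [Unique I] {ρ2 : Q →+ ℤ}
    (b : Module.Basis I ℤ Q) (hρ : ∀ i, ρ2 (b i) = 2) (μ : Q) :
    ρ2 μ = 2 * b.repr μ default := by
  conv_lhs => rw [← b.sum_repr μ]
  simp [hρ, mul_comm]

theorem injective_of_card_eq_two {Wf : Type*} [One Wf] {ℓ : Wf → ℕ} (hcard : Nat.card Wf = 2)
    (hℓ_le : ∀ y, ℓ y ≤ 1) (hℓ_zero : ∀ y, ℓ y = 0 ↔ y = 1) : Function.Injective ℓ := by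
  obtain ⟨s, -, hs⟩ := (Nat.card_eq_two_iff' (1 : Wf)).mp hcard
  have hne : ∀ y, y ≠ 1 ↔ ℓ y = 1 := fun y ↦ by
    have := hℓ_le y; rw [ne_eq, ← hℓ_zero]; omega
  intro y y' h
  by_cases hy : ℓ y = 0
  · rw [(hℓ_zero y).mp hy, (hℓ_zero y').mp (h ▸ hy)]
  · have hy1 : ℓ y = 1 := by have := hℓ_le y; omega
    rw [hs y ((hne y).mpr hy1), hs y' ((hne y').mpr (h ▸ hy1))]

/-- for the affine Weyl group `W = W̊ ⋉ t_{Q̊^∨}` of a simple Lie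
algebra `g̊` (elements modelled as pairs `(y, μ) ∈ W̊ × Q̊^∨`) with semi-infinite
length `ℓ^{∞/2}(t_μ y) = ℓ(y) − 2(ρ̊|μ)`, the level sets
`W^p = {w : ℓ^{∞/2}(w) = p}` are infinite for every `p ∈ ℤ` when `g̊ ≠ sl₂`
(i.e. the rank is > 1), and are singletons for every `p ∈ ℤ` when `g̊ = sl₂`
(rank 1, `W̊ = {1, s}` with `ℓ(s) = 1`). -/
theorem semiInfinite_length_level_sets
    {Wf Q I : Type*} [Group Wf] [AddCommGroup Q] [Fintype I]
    (ℓ : Wf → ℕ)                  -- the length function of the finite Weyl group W̊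
    (ρ2 : Q →+ ℤ)                 -- μ ↦ 2(ρ̊|μ)
    (b : Module.Basis I ℤ Q)             -- the simple coroots, a ℤ-basis of Q̊^∨
    (hρ : ∀ i : I, ρ2 (b i) = 2)  -- 2(ρ̊|αᵢ^∨) = 2
    (hone : ℓ 1 = 0)
    (hodd : ∃ y : Wf, ℓ y = 1) :
    -- if g̊ ≠ sl₂, i.e. the rank is at least 2, every W^p is infinite
    (1 < Fintype.card I →
      ∀ p : ℤ, {w : Wf × Q | (ℓ w.1 : ℤ) - ρ2 w.2 = p}.Infinite) ∧
    -- if g̊ = sl₂, every W^p has exactly one element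
    (Fintype.card I = 1 →
      Nat.card Wf = 2 → (∀ y : Wf, ℓ y ≤ 1) → (∀ y : Wf, ℓ y = 0 ↔ y = 1) →
      ∀ p : ℤ, ∃! w : Wf × Q, (ℓ w.1 : ℤ) - ρ2 w.2 = p) := by
  constructor
  · intro hcard p
    obtain ⟨i, j, hij⟩ := Fintype.exists_pair_of_one_lt_card hcard
    obtain ⟨w, rfl⟩ := semiInfiniteLength_surjective hone hodd (hρ i) p
    exact infinite_semiInfiniteLength_preimage_of_infinite_ker ℓ
      (ρ2.infinite_ker_of_basis b hij ((hρ i).trans (hρ j).symm)) w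
  · intro hcard hWf hℓ_le hℓ_zero p
    have : Unique I := Fintype.card_eq_one_iff_nonempty_unique.mp hcard |>.some
    have hρ_repr := ρ2.eq_two_mul_repr b hρ
    have hρ_inj : Function.Injective ρ2 := fun μ μ' h ↦
      b.ext_elem fun i ↦ by rw [Subsingleton.elim i default]; linarith [hρ_repr μ, hρ_repr μ']
    have hℓ_inj := injective_of_card_eq_two hWf hℓ_le hℓ_zero
    exact Function.Bijective.existsUnique
      ⟨semiInfiniteLength_injective hℓ_inj hℓ_le hρ_inj fun μ ↦ ⟨_, (hρ_repr μ).trans (two_mul _)⟩,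
        semiInfiniteLength_surjective hone hodd (hρ default)⟩ p
end
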